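/- arXiv:math-ph/0701049 — 4 statements merged into one kernel-verified Lean document; each statement's English description precedes it below -/
import Mathlib

section
/- Define A₀ = 1 and recursively A_i = a_i + Σ_{k=1}^{i-1} a_k · [coefficient of t^{i-k} in P^{2k+1}], where a_i = -(-1)^i and P = Σ_{j≥0} A_j t^j. Then A_i equals the i-th Catalan number: A_i = (1/(i+1)) · binomial(2i, i). -/
/-!
Since `[t^{i-k}] P^{2k+1}` with `k ≥ 1` involves only `A_0, …, A_{i-1}`, the recursion has at most
one solution, so it suffices that the Catalan series `C = 1 + t C²` satisfies it. When `A_0 = 1`,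
the right-hand side is `[t^i] Σ_{k=1}^{i} a_k t^k P^{2k+1}` (the term `k = i` contributes `a_i`).
For `P = C` put `u = C - 1 = t C²`: then `t^k C^{2k+1} = u^k (1 + u)`, the sum telescopes to
`u + (-u)^{i+1}`, and since `t^{i+1}` divides `(-u)^{i+1}` its `t^i`-coefficient is `catalan i`.
-/

open PowerSeries Finset

theorem PowerSeries.coeff_pow_eq_of_forall_lt_coeff_eq {R : Type*} [CommSemiring R] {f g : R⟦X⟧}
    {n : ℕ} (h : ∀ j < n, coeff j f = coeff j g) (a : ℕ) {m : ℕ} (hm : m < n) :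
    coeff m (f ^ a) = coeff m (g ^ a) := by
  have htrunc : trunc n f = trunc n g := by
    ext j
    simp only [coeff_trunc]
    split_ifs with hj
    exacts [h j hj, rfl]
  rw [← coeff_coe_trunc_of_lt hm, ← trunc_trunc_pow, htrunc, trunc_trunc_pow,
    coeff_coe_trunc_of_lt hm]

theorem sum_Icc_neg_neg_pow_mul_one_add {R : Type*} [CommRing R] (u : R) (N : ℕ) :
    ∑ k ∈ Icc 1 N, -(-u) ^ k * (1 + u) = u + (-u) ^ (N + 1) := by
  induction N with
  | zero => simp
  | succ N ih =>
    rw [sum_Icc_succ_top (by omega), ih]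
    ring

namespace PowerSeries

variable {R : Type*} [CommRing R]

theorem coeff_sum_C_mul_X_pow_mul_pow {P : R⟦X⟧} (hP : constantCoeff P = 1) {i : ℕ}
    (hi : 1 ≤ i) :
    coeff i (∑ k ∈ Icc 1 i, C (-(-1 : R) ^ k) * X ^ k * P ^ (2 * k + 1)) =
      -(-1) ^ i + ∑ k ∈ Icc 1 (i - 1), -(-1) ^ k * coeff (i - k) (P ^ (2 * k + 1)) := by
  obtain ⟨n, rfl⟩ := Nat.exists_eq_add_of_le' hi
  rw [sum_Icc_succ_top hi, map_add, add_comm (coeff _ _), Nat.add_sub_cancel]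
  simp only [map_sum, mul_assoc, coeff_C_mul, coeff_X_pow_mul', le_refl, if_true,
    Nat.sub_self, coeff_zero_eq_constantCoeff_apply, map_pow, hP, one_pow, mul_one]
  congr 1
  refine sum_congr rfl fun k hk => ?_
  rw [if_pos (by grind)]

variable (R)

theorem map_catalanSeries_sub_one :
    catalanSeries.map (Nat.castRingHom R) - 1 = X * catalanSeries.map (Nat.castRingHom R) ^ 2 := by
  have h := congrArg (map (Nat.castRingHom R)) catalanSeries_sq_mul_X_add_one
  simp only [map_add, map_mul, map_pow, map_X, map_one] at h
  linear_combination -h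

theorem catalan_eq_sum_coeff_catalanSeries_pow {i : ℕ} (hi : 1 ≤ i) :
    (catalan i : R) = -(-1) ^ i + ∑ k ∈ Icc 1 (i - 1),
      -(-1) ^ k * coeff (i - k) (catalanSeries.map (Nat.castRingHom R) ^ (2 * k + 1)) := by
  set c := catalanSeries.map (Nat.castRingHom R)
  have hc : c - 1 = X * c ^ 2 := map_catalanSeries_sub_one R
  have hsum : ∑ k ∈ Icc 1 i, C (-(-1 : R) ^ k) * X ^ k * c ^ (2 * k + 1) =
      (c - 1) + (-(c - 1)) ^ (i + 1) := by
    rw [← sum_Icc_neg_neg_pow_mul_one_add]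
    refine sum_congr rfl fun k _ => ?_
    have hk : X ^ k * c ^ (2 * k + 1) = (c - 1) ^ k * c := by
      rw [hc, mul_pow, ← pow_mul]
      ring
    rw [mul_assoc, hk, neg_pow (c - 1)]
    simp only [map_neg, map_pow, map_one]
    ring
  have htail : (-(c - 1)) ^ (i + 1) = X ^ (i + 1) * (-c ^ 2) ^ (i + 1) := by
    rw [hc]
    ring
  rw [← coeff_sum_C_mul_X_pow_mul_pow (by simp [c, ← coeff_zero_eq_constantCoeff_apply]) hi,
    hsum, htail, map_add, coeff_X_pow_mul']
  simp [c, Nat.one_le_iff_ne_zero.mp hi]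

end PowerSeries

/-- If `A₀ = 1` and `A_i = a_i + Σ_{k=1}^{i-1} a_k · [t^{i-k}] P^{2k+1}` for `i ≥ 1`,
with `a_k = -(-1)^k` and `P = Σ_j A_j t^j`, then `A_i` is the `i`-th Catalan number
`binomial(2i,i)/(i+1)`. -/
theorem recursion_gives_catalan (A : ℕ → ℚ) (hA0 : A 0 = 1)
    (hA : ∀ i : ℕ, 1 ≤ i → A i = (-(-1 : ℚ) ^ i) +
      ∑ k ∈ Finset.Icc 1 (i - 1), (-(-1 : ℚ) ^ k) *
        PowerSeries.coeff (i - k) ((PowerSeries.mk A) ^ (2 * k + 1))) :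
    ∀ i : ℕ, A i = (Nat.choose (2 * i) i : ℚ) / ((i : ℚ) + 1) := by
  have hcatalan : ∀ i, A i = catalan i := by
    intro i
    induction i using Nat.strong_induction_on with | _ i ih
    rcases Nat.eq_zero_or_pos i with rfl | hi
    · simp [hA0]
    rw [hA i hi, catalan_eq_sum_coeff_catalanSeries_pow ℚ hi]
    have hcoeff : ∀ j < i, coeff j (mk A) = coeff j (catalanSeries.map (Nat.castRingHom ℚ)) :=
      fun j hj => by simp [ih j hj]
    congr 1
    refine sum_congr rfl fun k hk => ?_
    rw [coeff_pow_eq_of_forall_lt_coeff_eq hcoeff _ (by grind)]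
  intro i
  rw [hcatalan i, eq_div_iff (by positivity), ← Nat.centralBinom_eq_two_mul_choose,
    ← succ_mul_catalan_eq_centralBinom]
  push_cast
  ring
end

section
/- For 0 < ρ < 1/2 and p = 1 - ρ, the quantity q̃ = -1 + Σ_{i≥0} C_i p^{i+1} ρ^i/(i+1) - ln p equals 1 + ((1-ρ)/ρ) · ln(1-ρ), where C_i is the i-th Catalan number. -/
/-!
With `x = ρ(1 - ρ)` every term of the series is `ρ⁻¹ C_i x^(i+1)/(i+1)`, and
`Σ C_i x^(i+1)/(i+1) = ∫₀ˣ C(t) dt` for the generating function `C(t) = Σ C_i tⁱ`.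
The Catalan recursion gives `C = 1 + t C²`, so `C(t) = 2 / (1 ± √(1 - 4t))`; bounding the partial
sums by `2` (they satisfy `S_{N+1} ≤ 1 + t S_N²`) selects the `+` sign. An explicit antiderivative
then gives `∫₀ˣ C = 1 - √(1 - 4x) + log ((1 + √(1 - 4x)) / 2)`, which is `2ρ + log (1 - ρ)`
because `√(1 - 4x) = 1 - 2ρ`.
-/

open Finset Real

/-- The `i`-th Catalan number `binomial(2i,i)/(i+1)`, as a real number. -/
noncomputable def catalanR (i : ℕ) : ℝ := (Nat.choose (2 * i) i : ℝ) / ((i : ℝ) + 1)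

lemma sum_range_sum_antidiagonal_mul_le {R : Type*} [CommSemiring R] [PartialOrder R]
    [IsOrderedRing R] {a b : ℕ → R} (ha : ∀ n, 0 ≤ a n) (hb : ∀ n, 0 ≤ b n) (N : ℕ) :
    ∑ n ∈ range N, ∑ kl ∈ antidiagonal n, a kl.1 * b kl.2
      ≤ (∑ k ∈ range N, a k) * ∑ l ∈ range N, b l := by
  set s := (range N ×ˢ range N).filter fun kl => kl.1 + kl.2 < N
  have hfiber : ∀ n ∈ range N, s.filter (fun kl => kl.1 + kl.2 = n) = antidiagonal n := by
    intro n hn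
    ext ⟨k, l⟩
    simp only [s, mem_filter, mem_product, mem_range, HasAntidiagonal.mem_antidiagonal] at hn ⊢
    omega
  calc ∑ n ∈ range N, ∑ kl ∈ antidiagonal n, a kl.1 * b kl.2
      = ∑ kl ∈ s, a kl.1 * b kl.2 := by
        rw [← sum_fiberwise_of_maps_to (g := fun kl : ℕ × ℕ => kl.1 + kl.2) (t := range N)
          (fun kl hkl => mem_range.mpr (mem_filter.mp hkl).2)]
        exact sum_congr rfl fun n hn => by rw [hfiber n hn]
    _ ≤ ∑ kl ∈ range N ×ˢ range N, a kl.1 * b kl.2 :=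
        sum_le_sum_of_subset_of_nonneg (filter_subset _ _)
          fun kl _ _ => mul_nonneg (ha _) (hb _)
    _ = (∑ k ∈ range N, a k) * ∑ l ∈ range N, b l := by rw [sum_mul_sum, sum_product]

lemma catalan_succ_mul_pow_succ (x : ℝ) (n : ℕ) :
    (catalan (n + 1) : ℝ) * x ^ (n + 1)
      = x * ∑ kl ∈ antidiagonal n, (catalan kl.1 * x ^ kl.1) * (catalan kl.2 * x ^ kl.2) := by
  rw [catalan_succ', Nat.cast_sum, sum_mul, mul_sum]
  refine sum_congr rfl fun kl hkl => ?_
  rw [← HasAntidiagonal.mem_antidiagonal.mp hkl]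
  push_cast
  ring

section

variable {x : ℝ}

lemma sum_range_succ_catalan_mul_pow_le (hx : 0 ≤ x) (N : ℕ) :
    ∑ n ∈ range (N + 1), (catalan n : ℝ) * x ^ n
      ≤ 1 + x * (∑ n ∈ range N, (catalan n : ℝ) * x ^ n) ^ 2 := by
  rw [sum_range_succ', sq]
  simp only [catalan_succ_mul_pow_succ, ← mul_sum, catalan_zero, Nat.cast_one, pow_zero]
  have htrunc := sum_range_sum_antidiagonal_mul_le (a := fun n => (catalan n : ℝ) * x ^ n)
    (b := fun n => (catalan n : ℝ) * x ^ n) (fun n => by positivity) (fun n => by positivity) N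
  linarith [mul_le_mul_of_nonneg_left htrunc hx]

lemma sum_range_catalan_mul_pow_le_two (hx0 : 0 ≤ x) (hx : x ≤ 1 / 4) (N : ℕ) :
    ∑ n ∈ range N, (catalan n : ℝ) * x ^ n ≤ 2 := by
  induction N with
  | zero => simp
  | succ N ih =>
    have hS : 0 ≤ ∑ n ∈ range N, (catalan n : ℝ) * x ^ n := sum_nonneg fun n _ => by positivity
    have hsq : (∑ n ∈ range N, (catalan n : ℝ) * x ^ n) ^ 2 ≤ 4 := by nlinarith
    nlinarith [sum_range_succ_catalan_mul_pow_le hx0 N]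

lemma summable_catalan_mul_pow (hx0 : 0 ≤ x) (hx : x ≤ 1 / 4) :
    Summable fun n => (catalan n : ℝ) * x ^ n :=
  summable_of_sum_range_le (fun n => by positivity) (sum_range_catalan_mul_pow_le_two hx0 hx)

lemma tsum_catalan_mul_pow_le_two (hx0 : 0 ≤ x) (hx : x ≤ 1 / 4) :
    ∑' n, (catalan n : ℝ) * x ^ n ≤ 2 :=
  Real.tsum_le_of_sum_range_le (fun n => by positivity) (sum_range_catalan_mul_pow_le_two hx0 hx)

lemma tsum_catalan_mul_pow_eq_one_add (hx0 : 0 ≤ x) (hx : x ≤ 1 / 4) :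
    ∑' n, (catalan n : ℝ) * x ^ n = 1 + x * (∑' n, (catalan n : ℝ) * x ^ n) ^ 2 := by
  have hs := summable_catalan_mul_pow hx0 hx
  have hnorm := summable_norm_iff.mpr hs
  rw [sq, tsum_mul_tsum_eq_tsum_sum_antidiagonal_of_summable_norm hnorm hnorm, ← tsum_mul_left,
    hs.tsum_eq_zero_add]
  simp [← catalan_succ_mul_pow_succ]

theorem tsum_catalan_mul_pow (hx0 : 0 ≤ x) (hx : x ≤ 1 / 4) :
    ∑' n, (catalan n : ℝ) * x ^ n = 2 / (1 + √(1 - 4 * x)) := by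
  set F := ∑' n, (catalan n : ℝ) * x ^ n
  set s := √(1 - 4 * x)
  have hs0 : 0 ≤ s := sqrt_nonneg _
  have hs : s ^ 2 = 1 - 4 * x := sq_sqrt (by linarith)
  have hF0 : 0 ≤ F := tsum_nonneg fun n => by positivity
  have hF2 := tsum_catalan_mul_pow_le_two hx0 hx
  have hquad : ((1 + s) * F - 2) * ((1 - s) * F - 2) = 0 := by
    have hF : F = 1 + x * F ^ 2 := tsum_catalan_mul_pow_eq_one_add hx0 hx
    linear_combination (-4) * hF - F ^ 2 * hs
  rw [eq_div_iff (by positivity), mul_comm]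
  rcases mul_eq_zero.mp hquad with h | h
  · linarith
  · nlinarith [mul_nonneg hs0 hF0]

lemma tsum_catalan_mul_pow_succ_div_eq_integral (hx0 : 0 ≤ x) (hx : x ≤ 1 / 4) :
    ∑' n : ℕ, (catalan n : ℝ) * x ^ (n + 1) / (n + 1)
      = ∫ t in 0..x, ∑' n, (catalan n : ℝ) * t ^ n := by
  let f : ℕ → C(ℝ, ℝ) := fun n => ⟨fun t => (catalan n : ℝ) * t ^ n, by fun_prop⟩
  have hnorm (n : ℕ) :
      ‖(f n).restrict (⟨Set.uIcc 0 x, isCompact_uIcc⟩ : TopologicalSpace.Compacts ℝ)‖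
        ≤ (catalan n : ℝ) * x ^ n := by
    refine (ContinuousMap.norm_le _ (by positivity)).mpr fun ⟨t, ht⟩ => ?_
    obtain ⟨ht0, htx⟩ : t ∈ Set.Icc 0 x := by simpa [Set.uIcc_of_le hx0] using ht
    simp only [ContinuousMap.restrict_apply, ContinuousMap.coe_mk, f, norm_mul, norm_pow,
      Real.norm_natCast, Real.norm_of_nonneg ht0]
    gcongr
  have hsum := (summable_catalan_mul_pow hx0 hx).of_nonneg_of_le (fun n => norm_nonneg _) hnorm
  refine .trans (tsum_congr fun n => ?_)
    (intervalIntegral.tsum_intervalIntegral_eq_of_summable_norm hsum)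
  simp only [f, ContinuousMap.coe_mk, intervalIntegral.integral_const_mul, integral_pow]
  simp
  ring

lemma integral_two_div_one_add_sqrt (hx : x < 1 / 4) :
    ∫ t in 0..x, 2 / (1 + √(1 - 4 * t))
      = 1 - √(1 - 4 * x) + log ((1 + √(1 - 4 * x)) / 2) := by
  have hderiv : ∀ t ∈ Set.uIcc 0 x, HasDerivAt
      (fun t => 1 - √(1 - 4 * t) + log ((1 + √(1 - 4 * t)) / 2)) (2 / (1 + √(1 - 4 * t))) t := by
    intro t ht
    have hpos : 0 < 1 - 4 * t := by linarith [ht.2, max_lt (by norm_num : (0 : ℝ) < 1 / 4) hx]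
    have hs : 0 < √(1 - 4 * t) := sqrt_pos.mpr hpos
    have hsqrt : HasDerivAt (fun t => √(1 - 4 * t)) (1 / (2 * √(1 - 4 * t)) * -4) t :=
      (hasDerivAt_sqrt hpos.ne').comp t
        (((hasDerivAt_id t).const_mul 4).const_sub 1 |>.congr_deriv (by ring))
    refine ((hsqrt.const_sub 1).add
      (((hsqrt.const_add 1).div_const 2).log (by positivity))).congr_deriv ?_
    field_simp
    ring
  have hint : IntervalIntegrable (fun t => 2 / (1 + √(1 - 4 * t))) MeasureTheory.volume 0 x :=
    (continuous_const.div (by fun_prop) fun t => by positivity).intervalIntegrable _ _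
  rw [intervalIntegral.integral_eq_sub_of_hasDerivAt hderiv hint]
  simp

theorem tsum_catalan_mul_pow_succ_div (hx0 : 0 ≤ x) (hx : x < 1 / 4) :
    ∑' n : ℕ, (catalan n : ℝ) * x ^ (n + 1) / (n + 1)
      = 1 - √(1 - 4 * x) + log ((1 + √(1 - 4 * x)) / 2) := by
  rw [tsum_catalan_mul_pow_succ_div_eq_integral hx0 hx.le, ← integral_two_div_one_add_sqrt hx]
  refine intervalIntegral.integral_congr fun t ht => ?_
  obtain ⟨ht0, htx⟩ : t ∈ Set.Icc 0 x := by simpa [Set.uIcc_of_le hx0] using ht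
  exact tsum_catalan_mul_pow ht0 (by linarith)

end

lemma catalanR_eq_catalan (i : ℕ) : catalanR i = catalan i := by
  rw [catalanR, div_eq_iff (by positivity), ← Nat.centralBinom_eq_two_mul_choose,
    ← succ_mul_catalan_eq_centralBinom]
  push_cast
  ring

/-- For `0 < ρ < 1/2` and `p = 1 - ρ`:
`q̃ = -1 + Σ_{i≥0} C_i p^{i+1} ρ^i/(i+1) - ln p = 1 + ((1-ρ)/ρ)·ln(1-ρ)`. -/
theorem qtilde_value (ρ : ℝ) (hρ0 : 0 < ρ) (hρ : ρ < 1 / 2) :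
    -1 + (∑' i : ℕ, catalanR i * (1 - ρ) ^ (i + 1) * ρ ^ i / ((i : ℝ) + 1))
        - Real.log (1 - ρ)
      = 1 + ((1 - ρ) / ρ) * Real.log (1 - ρ) := by
  have hsqrt : √(1 - 4 * (ρ * (1 - ρ))) = 1 - 2 * ρ := by
    rw [show 1 - 4 * (ρ * (1 - ρ)) = (1 - 2 * ρ) ^ 2 by ring]
    exact sqrt_sq (by linarith)
  have hseries : ∑' i : ℕ, catalanR i * (1 - ρ) ^ (i + 1) * ρ ^ i / ((i : ℝ) + 1)
      = ρ⁻¹ * ∑' n : ℕ, (catalan n : ℝ) * (ρ * (1 - ρ)) ^ (n + 1) / (n + 1) := by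
    rw [← tsum_mul_left]
    refine tsum_congr fun i => ?_
    rw [catalanR_eq_catalan, mul_pow]
    field_simp
    ring
  rw [hseries, tsum_catalan_mul_pow_succ_div (mul_nonneg hρ0.le (by linarith)) (by nlinarith),
    hsqrt, show (1 + (1 - 2 * ρ)) / 2 = 1 - ρ by ring]
  field_simp
  ring
end

section
/- If p(ρ) and f satisfy p + p·f(ρp) = 1 and p = 1 - ρ for all ρ in a neighborhood of 0, where f is a power series with f(0) = 0, then f(z) = (1 - √(1-4z))/(1 + √(1-4z)) on its disc of convergence |z| < 1/4. -/
open Filter Set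

/-- If `f` is the sum of a power series with zero constant term on `|z| < 1/4`, and
`p = 1 - ρ` satisfies `p + p·f(ρp) = 1` for all `ρ` in a neighborhood of `0`, then
`f(z) = (1 - √(1-4z))/(1 + √(1-4z))` for `|z| < 1/4`. -/
theorem functional_equation_determines_catalan_gf
    (f : ℝ → ℝ) (a : ℕ → ℝ) (ha0 : a 0 = 0)
    (hconv : ∀ z : ℝ, |z| < 1 / 4 → HasSum (fun i : ℕ => a i * z ^ i) (f z))
    (heq : ∃ ε > (0 : ℝ), ∀ ρ : ℝ, |ρ| < ε →
      (1 - ρ) + (1 - ρ) * f (ρ * (1 - ρ)) = 1) :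
    ∀ z : ℝ, |z| < 1 / 4 →
      f z = (1 - Real.sqrt (1 - 4 * z)) / (1 + Real.sqrt (1 - 4 * z)) := by
  obtain ⟨ε, hε, heq⟩ := heq
  set S : Set ℝ := Metric.ball (0:ℝ) (1/4) with hSdef
  have hmemS : ∀ z : ℝ, z ∈ S ↔ |z| < 1/4 := by
    intro z; simp [hSdef, Metric.mem_ball, Real.dist_eq]
  -- f is analytic on S
  have hfa : AnalyticOnNhd ℝ f S := by
    have hball : HasFPowerSeriesOnBall f (FormalMultilinearSeries.ofScalars ℝ a) 0
        (ENNReal.ofReal (1/4)) := by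
      refine ⟨?_, by simp, ?_⟩
      · refine ENNReal.le_of_forall_nnreal_lt fun r hr => ?_
        apply FormalMultilinearSeries.le_radius_of_summable_norm
        have hrr : (r:ℝ) < 1/4 := by
          have := (ENNReal.lt_ofReal_iff_toReal_lt (by simp)).mp hr
          simpa using this
        have hr' : |(r:ℝ)| < 1/4 := by rwa [abs_of_nonneg r.coe_nonneg]
        have hs : Summable fun n : ℕ => |a n * (r:ℝ) ^ n| :=
          (summable_abs_iff.mpr (hconv _ hr').summable)
        refine hs.congr fun n => ?_
        rw [FormalMultilinearSeries.ofScalars_norm, abs_mul, abs_pow,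
          abs_of_nonneg r.coe_nonneg]
        rfl
      · intro y hy
        rw [Metric.emetric_ball] at hy
        simp only [Metric.mem_ball, dist_zero_right, Real.norm_eq_abs] at hy
        have h := hconv y hy
        simp only [zero_add]
        have he : ∀ n : ℕ, (FormalMultilinearSeries.ofScalars ℝ a n fun _ => y) = a n * y ^ n := by
          intro n
          rw [FormalMultilinearSeries.ofScalars_apply_eq, smul_eq_mul]
        exact HasSum.congr_fun h fun n => he n
    have := hball.analyticOnNhd
    rwa [Metric.emetric_ball] at this
  have hfc : ContinuousOn f S := hfa.continuousOn
  -- f 0 = 0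
  have hf0 : f 0 = 0 := by
    have h1 := hconv 0 (by norm_num)
    have h2 : HasSum (fun i : ℕ => a i * (0:ℝ) ^ i) (a 0) := by
      have : (fun i : ℕ => a i * (0:ℝ) ^ i) = fun i => if i = 0 then a 0 else 0 := by
        funext i; cases i <;> simp
      rw [this]
      exact hasSum_ite_eq 0 (a 0)
    rw [h1.unique h2, ha0]
  -- h := z*(1+f z)^2 - f z vanishes near 0
  have hev : (fun z : ℝ => z * (1 + f z)^2 - f z) =ᶠ[nhds 0] (fun _ => (0:ℝ)) := by
    have hcont : ContinuousAt (fun z : ℝ => (1 - Real.sqrt (1 - 4*z))/2) 0 := by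
      fun_prop
    have hval : (1 - Real.sqrt (1 - 4*(0:ℝ)))/2 = 0 := by norm_num
    have h1 : ∀ᶠ z : ℝ in nhds 0, |(1 - Real.sqrt (1 - 4*z))/2| < ε := by
      have ht : Tendsto (fun z : ℝ => (1 - Real.sqrt (1 - 4*z))/2) (nhds 0) (nhds 0) := by
        simpa [hval] using hcont.tendsto
      have : ∀ᶠ w : ℝ in nhds 0, |w| < ε := by
        have : Set.Ioo (-ε) ε ∈ nhds (0:ℝ) := Ioo_mem_nhds (by linarith) hε
        filter_upwards [this] with w hw
        rw [abs_lt]; exact ⟨hw.1, hw.2⟩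
      exact ht.eventually this
    have h2 : ∀ᶠ z : ℝ in nhds 0, (0:ℝ) < 1 - 4*z := by
      have : Set.Ioo (-(1/8) : ℝ) (1/8) ∈ nhds (0:ℝ) := Ioo_mem_nhds (by norm_num) (by norm_num)
      filter_upwards [this] with z hz
      nlinarith [hz.1, hz.2]
    filter_upwards [h1, h2] with z hz1 hz2
    set s := Real.sqrt (1 - 4*z) with hs
    have hs2 : s^2 = 1 - 4*z := Real.sq_sqrt hz2.le
    have hs0 : 0 ≤ s := Real.sqrt_nonneg _
    set ρ := (1 - s)/2 with hρ
    have hρz : ρ * (1 - ρ) = z := by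
      rw [hρ]; nlinarith [hs2]
    have hne : (1:ℝ) - ρ ≠ 0 := by rw [hρ]; intro h; nlinarith
    have hq := heq ρ hz1
    rw [hρz] at hq
    -- hq : (1-ρ) + (1-ρ) * f z = 1
    have hfz : f z = ρ / (1 - ρ) := by
      field_simp
      linarith [hq]
    rw [hfz, ← hρz]
    field_simp
    ring
  -- identity theorem: h = 0 on S
  have hh : Set.EqOn (fun z : ℝ => z * (1 + f z)^2 - f z) (fun _ => (0:ℝ)) S := by
    have hha : AnalyticOnNhd ℝ (fun z : ℝ => z * (1 + f z)^2 - f z) S :=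
      ((analyticOnNhd_id).mul ((analyticOnNhd_const.add hfa).pow 2)).sub hfa
    have h0S : (0:ℝ) ∈ S := by rw [hmemS]; norm_num
    exact hha.eqOn_of_preconnected_of_eventuallyEq analyticOnNhd_const
      ((convex_ball (0:ℝ) (1/4)).isPreconnected) h0S hev
  -- key factorization
  set c : ℝ → ℝ := fun z => 2*z*(1 + f z) - 1 + Real.sqrt (1 - 4*z) with hcdef
  have hkey : ∀ z ∈ S, c z = 0 ∨ c z = 2 * Real.sqrt (1 - 4*z) := by
    intro z hzS
    have hz4 : (0:ℝ) < 1 - 4*z := by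
      rw [hmemS] at hzS
      have := abs_lt.mp hzS
      linarith [this.2]
    have hs2 : Real.sqrt (1 - 4*z)^2 = 1 - 4*z := Real.sq_sqrt hz4.le
    have h0 : z * (1 + f z)^2 - f z = 0 := hh hzS
    have hfac : c z * (2*z*(1 + f z) - 1 - Real.sqrt (1 - 4*z)) = 0 := by
      rw [hcdef]
      linear_combination (4*z) * h0 - hs2
    rcases mul_eq_zero.mp hfac with h | h
    · exact Or.inl h
    · right; rw [hcdef]; simp only; linarith [h]
  have hccont : ContinuousOn c S := by
    rw [hcdef]
    apply ContinuousOn.add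
    · exact ((continuousOn_const.mul continuousOn_id).mul
        (continuousOn_const.add hfc)).sub continuousOn_const
    · exact (Real.continuous_sqrt.comp (by continuity)).continuousOn
  have hc0 : c 0 = 0 := by
    rw [hcdef]; simp [hf0]
  -- c = 0 on S via IVT
  intro z₀ hz₀
  have hz₀S : z₀ ∈ S := (hmemS z₀).mpr hz₀
  set s₀ := Real.sqrt (1 - 4*z₀) with hs₀def
  have hz₀4 : (0:ℝ) < 1 - 4*z₀ := by
    have := abs_lt.mp hz₀; linarith [this.2]
  have hs₀2 : s₀^2 = 1 - 4*z₀ := Real.sq_sqrt hz₀4.le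
  have hs₀pos : 0 < s₀ := Real.sqrt_pos.mpr hz₀4
  have hsubS : Set.uIcc 0 z₀ ⊆ S := by
    intro w hw
    rw [hmemS]
    rw [Set.mem_uIcc] at hw
    rcases hw with ⟨h1, h2⟩ | ⟨h1, h2⟩ <;> rw [abs_lt] <;> constructor <;>
      nlinarith [abs_lt.mp hz₀]
  have habs : ∀ w ∈ Set.uIcc 0 z₀, |w| ≤ |z₀| := by
    intro w hw
    rw [Set.mem_uIcc] at hw
    rw [abs_le]
    rcases hw with ⟨h1, h2⟩ | ⟨h1, h2⟩ <;> constructor <;>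
      [skip; skip; skip; skip] <;> cases abs_cases z₀ <;> cases abs_cases w <;> linarith
  set m := Real.sqrt (1 - 4*|z₀|) with hmdef
  have hm4 : (0:ℝ) < 1 - 4*|z₀| := by linarith
  have hmpos : 0 < m := Real.sqrt_pos.mpr hm4
  have hmle : ∀ w ∈ Set.uIcc 0 z₀, m ≤ Real.sqrt (1 - 4*w) := by
    intro w hw
    apply Real.sqrt_le_sqrt
    have := habs w hw
    have := le_abs_self w
    linarith
  have hcz₀ : c z₀ = 0 := by
    by_contra hcne
    have hcz : c z₀ = 2 * s₀ := by
      rcases hkey z₀ hz₀S with h | h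
      · exact absurd h hcne
      · exact h
    -- IVT: m is between c 0 = 0 and c z₀ = 2 s₀ ≥ 2m
    have hms₀ : m ≤ s₀ := hmle z₀ Set.right_mem_uIcc
    have hivt := intermediate_value_uIcc (hccont.mono hsubS)
    have hmmem : m ∈ Set.uIcc (c 0) (c z₀) := by
      rw [hc0, hcz]
      rw [Set.mem_uIcc]
      left
      constructor <;> nlinarith
    obtain ⟨z₁, hz₁mem, hz₁⟩ := hivt hmmem
    rcases hkey z₁ (hsubS hz₁mem) with h | h
    · rw [hz₁] at h; exact absurd h hmpos.ne'
    · rw [hz₁] at h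
      have := hmle z₁ hz₁mem
      nlinarith
  -- conclude
  have hs₀ne : (1:ℝ) + s₀ ≠ 0 := by positivity
  rcases eq_or_ne z₀ 0 with rfl | hz₀ne
  · rw [hf0, hs₀def]
    norm_num
  · rw [hcdef] at hcz₀
    simp only at hcz₀
    rw [eq_div_iff hs₀ne]
    have h2z : (2:ℝ) * z₀ ≠ 0 := by simpa using hz₀ne
    apply mul_left_cancel₀ h2z
    rw [hs₀def] at *
    nlinarith [hcz₀, hs₀2]
end

section
/- The Catalan numbers satisfy the alternating-sign convolution identity implied by the recursion A_i = a_i + Σ_{k=1}^{i-1} a_k [t^{i-k}](Σ_j A_j t^j)^{2k+1} with a_k = -(-1)^k: explicitly, for each i ≥ 1, C_i = -(-1)^i + Σ_{k=1}^{i-1} (-(-1)^k) · Σ_{j₁+...+j_{2k+1} = i-k} C_{j₁}···C_{j_{2k+1}}, where C_m is the m-th Catalan number (C₀ = 1). -/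
/-! Let `C = 1 + u` with `u = X C²` be the Catalan series. Then
`∑_{k ≥ 1} -(-u)^k C = u (1 + u)⁻¹ C = u = C - 1`, and the `k`-th summand is `-(-1)^k X^k C^(2k+1)`,
whose coefficient of `X^i` is the inner convolution sum. Truncating at `k = i` only changes
coefficients of order `> i`. -/

open PowerSeries Finset

/-- The `i`-th Catalan number `binomial(2i,i)/(i+1)`, as a rational number. -/
def catalanQ (i : ℕ) : ℚ := (Nat.choose (2 * i) i : ℚ) / ((i : ℚ) + 1)

theorem PowerSeries.coeff_pow_eq_sum_antidiagonalTuple {R : Type*} [CommSemiring R]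
    (φ : R⟦X⟧) (k n : ℕ) :
    coeff n (φ ^ k) = ∑ j ∈ Nat.antidiagonalTuple k n, ∏ m, coeff (j m) φ := by
  rw [← Fin.prod_const, coeff_prod]
  refine sum_nbij' (⇑) Finsupp.equivFunOnFinite.symm ?_ ?_ ?_ ?_ ?_ <;>
    simp [Nat.mem_antidiagonalTuple]

theorem catalanQ_eq_catalan (n : ℕ) : catalanQ n = catalan n := by
  rw [catalanQ, ← Nat.centralBinom_eq_two_mul_choose, ← succ_mul_catalan_eq_centralBinom]
  push_cast
  field_simp

local notation "𝒞" => map (Nat.castRingHom ℚ) catalanSeries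

theorem coeff_map_catalanSeries (n : ℕ) : coeff n 𝒞 = catalanQ n := by
  simp [catalanSeries_coeff, catalanQ_eq_catalan]

theorem map_catalanSeries_eq : 𝒞 = 1 + X * 𝒞 ^ 2 := by
  conv_lhs => rw [← catalanSeries_sq_mul_X_add_one]
  simp only [map_add, map_mul, map_pow, map_X, map_one]
  ring

theorem coeff_X_pow_mul_map_catalanSeries_pow {i k : ℕ} (hk : k ≤ i) :
    coeff i (X ^ k * 𝒞 ^ (2 * k + 1)) =
      ∑ j ∈ Nat.antidiagonalTuple (2 * k + 1) (i - k), ∏ m, catalanQ (j m) := by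
  simp only [coeff_X_pow_mul', if_pos hk, coeff_pow_eq_sum_antidiagonalTuple,
    coeff_map_catalanSeries]

theorem catalanQ_eq_sum_Icc (i : ℕ) (hi : 1 ≤ i) :
    catalanQ i = ∑ k ∈ Icc 1 i, (-(-1 : ℚ) ^ k) *
        ∑ j ∈ Nat.antidiagonalTuple (2 * k + 1) (i - k), ∏ m : Fin (2 * k + 1), catalanQ (j m) := by
  have h := congrArg (coeff i) (sum_Icc_neg_neg_pow_mul_one_add (X * 𝒞 ^ 2) i)
  have hterm (k : ℕ) : -(-(X * 𝒞 ^ 2)) ^ k * (1 + X * 𝒞 ^ 2) =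
      C (-(-1 : ℚ) ^ k) * (X ^ k * 𝒞 ^ (2 * k + 1)) := by
    rw [← map_catalanSeries_eq]; simp only [map_neg, map_pow, map_one]; ring
  have htail : coeff i ((-(X * 𝒞 ^ 2)) ^ (i + 1)) = 0 := by
    rw [show (-(X * 𝒞 ^ 2)) ^ (i + 1) = X ^ (i + 1) * (-𝒞 ^ 2) ^ (i + 1) by ring,
      coeff_X_pow_mul', if_neg (by omega)]
  have hlead : coeff i (X * 𝒞 ^ 2) = catalanQ i := by
    rw [eq_sub_of_add_eq' map_catalanSeries_eq.symm, map_sub, coeff_one, if_neg (by omega),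
      coeff_map_catalanSeries, sub_zero]
  simp only [hterm, map_sum, coeff_C_mul, map_add, htail, add_zero, hlead] at h
  rw [← h]
  exact sum_congr rfl fun k hk => by rw [coeff_X_pow_mul_map_catalanSeries_pow (mem_Icc.1 hk).2]

/-- The Catalan numbers satisfy the alternating-sign convolution identity: for `i ≥ 1`,
`C_i = -(-1)^i + Σ_{k=1}^{i-1} (-(-1)^k) Σ_{j₁+⋯+j_{2k+1} = i-k} C_{j₁} ⋯ C_{j_{2k+1}}`. -/
theorem catalan_alternating_convolution (i : ℕ) (hi : 1 ≤ i) :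
    catalanQ i = (-(-1 : ℚ) ^ i) +
      ∑ k ∈ Finset.Icc 1 (i - 1), (-(-1 : ℚ) ^ k) *
        ∑ j ∈ Finset.Nat.antidiagonalTuple (2 * k + 1) (i - k),
          ∏ m : Fin (2 * k + 1), catalanQ (j m) := by
  obtain ⟨n, rfl⟩ := Nat.exists_eq_add_of_le' hi
  rw [catalanQ_eq_sum_Icc _ hi, sum_Icc_succ_top (by omega), Nat.add_sub_cancel, Nat.sub_self,
    Nat.antidiagonalTuple_zero_right, sum_singleton]
  simp [catalanQ, add_comm]
end
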